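/- Let b∈[-1,1] and let p,q,τ13,τ23 be real numbers (representing ∂_y u_1, ∂_y u_2 and stress components). Suppose τ13 and τ23 satisfy the linear system A·τ13 + B·τ23 = 2(1-θ)p and B·τ13 + C·τ23 = 2(1-θ)q, where A = 2 + 2(1-b²)p² - (1/2)(b²-1)q², B = (3/2)(1-b²)p·q, and C = 2 + 2(1-b²)q² - (1/2)(b²-1)p². Then τ13 = (1-θ)p/(1+(1-b²)(p²+q²)) and τ23 = (1-θ)q/(1+(1-b²)(p²+q²)). -/
import Mathlib


theorem stmt_0 (b θ p q τ13 τ23 : ℝ) (hb : b ∈ Set.Icc (-1 : ℝ) 1)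
    (A B C : ℝ)
    (hA : A = 2 + 2*(1-b^2)*p^2 - (1/2)*(b^2-1)*q^2)
    (hB : B = (3/2)*(1-b^2)*p*q)
    (hC : C = 2 + 2*(1-b^2)*q^2 - (1/2)*(b^2-1)*p^2)
    (h1 : A*τ13 + B*τ23 = 2*(1-θ)*p)
    (h2 : B*τ13 + C*τ23 = 2*(1-θ)*q) :
    τ13 = (1-θ)*p / (1 + (1-b^2)*(p^2+q^2)) ∧
    τ23 = (1-θ)*q / (1 + (1-b^2)*(p^2+q^2)) := by
  obtain ⟨hb1, hb2⟩ := hb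
  have hσ : (0:ℝ) ≤ 1 - b^2 := by nlinarith
  have hD : (0:ℝ) < 1 + (1-b^2)*(p^2+q^2) := by nlinarith [sq_nonneg p, sq_nonneg q]
  have h4 : (0:ℝ) < 4 + (1-b^2)*(p^2+q^2) := by nlinarith [sq_nonneg p, sq_nonneg q]
  subst hA hB hC
  have e1 : (4 + (1-b^2)*(p^2+q^2)) *
      (τ13*(1 + (1-b^2)*(p^2+q^2)) - (1-θ)*p) = 0 := by
    linear_combination (2 + 2*(1-b^2)*q^2 - (1/2)*(b^2-1)*p^2) * h1
      - ((3/2)*(1-b^2)*p*q) * h2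
  have e2 : (4 + (1-b^2)*(p^2+q^2)) *
      (τ23*(1 + (1-b^2)*(p^2+q^2)) - (1-θ)*q) = 0 := by
    linear_combination (2 + 2*(1-b^2)*p^2 - (1/2)*(b^2-1)*q^2) * h2
      - ((3/2)*(1-b^2)*p*q) * h1
  have f1 : τ13*(1 + (1-b^2)*(p^2+q^2)) = (1-θ)*p := by
    rcases mul_eq_zero.mp e1 with h | h
    · exact absurd h h4.ne'
    · linarith
  have f2 : τ23*(1 + (1-b^2)*(p^2+q^2)) = (1-θ)*q := by
    rcases mul_eq_zero.mp e2 with h | h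
    · exact absurd h h4.ne'
    · linarith
  constructor
  · rw [eq_div_iff hD.ne']; exact f1
  · rw [eq_div_iff hD.ne']; exact f2
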